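/- arXiv:2402.08173 — 2 statements merged into one kernel-verified Lean document; each statement's English description precedes it below -/
import Mathlib

section
/- Suppose E[ξ²] < ∞ and set γ := (2σ² + 2μ²)^{1/2}/σ². Then for every n ≥ 1 and all A, B ∈ M_n(ℂ): ⦀AB⦀_{X,2} ≤ γ · ⦀A⦀_{X,2} · ⦀B⦀_{X,2} (so γ⦀·⦀_{X,2} is a submultiplicative norm on M_n(ℂ) with γ independent of n); moreover ⦀UAU^*⦀_{X,2} = ⦀A⦀_{X,2} for every n×n unitary matrix U and every Hermitian A ∈ M_n(ℂ). -/
open MeasureTheory ProbabilityTheory Matrix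

/-- The norm `‖A‖_{X,d}` on Hermitian matrices induced by the random vector `X`:
`(E[|Σ_i X_i λ_i|^d] / Γ(d+1))^(1/d)`, where `λ` is the eigenvalue vector of `A`. -/
noncomputable def hermNormXd {Ω : Type} [MeasurableSpace Ω] (P : Measure Ω)
    {n : ℕ} (X : Fin n → Ω → ℝ) (d : ℝ) (A : Matrix (Fin n) (Fin n) ℂ) : ℝ :=
  if hA : A.IsHermitian then
    ((∫ ω, |∑ i, X i ω * hA.eigenvalues i| ^ d ∂P) / Real.Gamma (d + 1)) ^ (1 / d)
  else 0

/-- The norm `⦀Z⦀_{X,d}` on all of `M_n(ℂ)`: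
`((1/(2π b_d)) ∫_0^{2π} ‖e^{it}Z + e^{-it}Z^*‖_{X,d}^d dt)^(1/d)` with
`b_d = Γ(d+1)/Γ(d/2+1)^2`, so `1/(2π b_d) = Γ(d/2+1)^2/(2π Γ(d+1))`. -/
noncomputable def matNormXd {Ω : Type} [MeasurableSpace Ω] (P : Measure Ω)
    {n : ℕ} (X : Fin n → Ω → ℝ) (d : ℝ) (Z : Matrix (Fin n) (Fin n) ℂ) : ℝ :=
  ((Real.Gamma (d / 2 + 1) ^ 2 / (2 * Real.pi * Real.Gamma (d + 1))) *
    ∫ t in (0:ℝ)..(2 * Real.pi),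
      hermNormXd P X d (Complex.exp (↑t * Complex.I) • Z +
        Complex.exp (-(↑t * Complex.I)) • Zᴴ) ^ d) ^ (1 / d)

/-!
For `d = 2` everything is explicit. If `X` has i.i.d. coordinates with mean `μ` and variance
`σ²`, then `E[(Σ λᵢ Xᵢ)²] = σ² Σ λᵢ² + μ² (Σ λᵢ)²`, and for a Hermitian `A` the two sums are
`‖A‖_F²` and `|tr A|²`. The matrix `e^{it} Z + e^{-it} Z*` has Frobenius norm and trace whose
squares are constants plus multiples of `Re (e^{2it} w)`, and those average out over a period, so
`⦀Z⦀²_{X,2} = (σ² ‖Z‖_F² + μ² |tr Z|²) / 2`. This form is invariant under unitary conjugation,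
and submultiplicativity follows from `‖AB‖_F ≤ ‖A‖_F ‖B‖_F` and `|tr (AB)| ≤ ‖A‖_F ‖B‖_F`
(Cauchy–Schwarz), together with `σ² ‖A‖_F² / 2 ≤ ⦀A⦀²_{X,2}`; this is where
`γ² = (2σ² + 2μ²) / σ⁴` comes from.
-/

attribute [local instance] Matrix.frobeniusNormedAddCommGroup Matrix.frobeniusNormSMulClass

namespace Matrix

variable {𝕜 : Type*} [RCLike 𝕜] {m n : Type*} [Fintype m] [Fintype n]

theorem frobenius_norm_sq_eq_sum (A : Matrix m n 𝕜) :
    ‖A‖ ^ 2 = ∑ i, ∑ j, ‖A i j‖ ^ 2 := by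
  rw [frobenius_norm_def, ← Real.sqrt_eq_rpow, Real.sq_sqrt (by positivity)]
  simp_rw [Real.rpow_two]

theorem frobenius_norm_sq_eq_re_trace (A : Matrix m n 𝕜) :
    ‖A‖ ^ 2 = RCLike.re (Aᴴ * A).trace := by
  simp only [frobenius_norm_sq_eq_sum, trace, diag_apply, mul_apply, conjTranspose_apply,
    RCLike.star_def, RCLike.conj_mul, map_sum, ← RCLike.ofReal_pow, RCLike.ofReal_re]
  exact Finset.sum_comm

theorem frobenius_norm_unitary_mul [DecidableEq m] {U : Matrix m m 𝕜}
    (hU : U ∈ unitaryGroup m 𝕜) (A : Matrix m n 𝕜) : ‖U * A‖ = ‖A‖ := by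
  have hUU : Uᴴ * U = 1 := (mem_unitaryGroup_iff').mp hU
  rw [← sq_eq_sq₀ (norm_nonneg _) (norm_nonneg _), frobenius_norm_sq_eq_re_trace,
    frobenius_norm_sq_eq_re_trace, conjTranspose_mul, Matrix.mul_assoc, ← Matrix.mul_assoc Uᴴ,
    hUU, Matrix.one_mul]

theorem frobenius_norm_mul_unitary [DecidableEq n] {U : Matrix n n 𝕜}
    (hU : U ∈ unitaryGroup n 𝕜) (A : Matrix m n 𝕜) : ‖A * U‖ = ‖A‖ := by
  rw [← frobenius_norm_conjTranspose, conjTranspose_mul, ← star_eq_conjTranspose U,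
    frobenius_norm_unitary_mul (Unitary.star_mem hU), frobenius_norm_conjTranspose]

theorem norm_trace_mul_le (A : Matrix m n 𝕜) (B : Matrix n m 𝕜) :
    ‖(A * B).trace‖ ≤ ‖A‖ * ‖B‖ := by
  have hsqrt (M : Matrix m n 𝕜) : ‖M‖ = √(∑ x : m × n, ‖M x.1 x.2‖ ^ 2) := by
    rw [← Real.sqrt_sq (norm_nonneg M), frobenius_norm_sq_eq_sum, Fintype.sum_prod_type]
  calc ‖(A * B).trace‖ = ‖∑ x : m × n, A x.1 x.2 * Bᵀ x.1 x.2‖ := by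
        simp [trace, mul_apply, Fintype.sum_prod_type]
    _ ≤ ∑ x : m × n, ‖A x.1 x.2‖ * ‖Bᵀ x.1 x.2‖ :=
        norm_sum_le_of_le _ fun x _ => norm_mul_le _ _
    _ ≤ ‖A‖ * ‖Bᵀ‖ := by
        rw [hsqrt A, hsqrt Bᵀ]
        exact Real.sum_mul_le_sqrt_mul_sqrt _ _ _
    _ = ‖A‖ * ‖B‖ := by rw [frobenius_norm_transpose]

theorem IsHermitian.sum_eigenvalues_sq [DecidableEq n] {A : Matrix n n 𝕜} (hA : A.IsHermitian) :
    ∑ i, hA.eigenvalues i ^ 2 = ‖A‖ ^ 2 := by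
  conv_rhs => rw [hA.spectral_theorem, Unitary.conjStarAlgAut_apply,
    frobenius_norm_mul_unitary (Unitary.star_mem (SetLike.coe_mem _)),
    frobenius_norm_unitary_mul (SetLike.coe_mem _), frobenius_norm_diagonal,
    EuclideanSpace.norm_sq_eq]
  simp

theorem IsHermitian.sq_sum_eigenvalues [DecidableEq n] {A : Matrix n n 𝕜} (hA : A.IsHermitian) :
    (∑ i, hA.eigenvalues i) ^ 2 = ‖A.trace‖ ^ 2 := by
  rw [hA.trace_eq_sum_eigenvalues, ← RCLike.ofReal_sum, RCLike.norm_ofReal, sq_abs]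

theorem norm_add_conj_sq (a : 𝕜) : ‖a + star a‖ ^ 2 = 2 * ‖a‖ ^ 2 + 2 * RCLike.re (a * a) := by
  rw [RCLike.star_def, RCLike.add_conj, RCLike.norm_sq_eq_def, RCLike.norm_sq_eq_def]
  simp only [RCLike.mul_re, RCLike.ofNat_re, RCLike.ofReal_re, RCLike.ofNat_im,
    RCLike.ofReal_im, mul_zero, sub_zero, RCLike.mul_im, zero_mul, add_zero]
  ring

theorem frobenius_norm_add_conjTranspose_sq (M : Matrix n n 𝕜) :
    ‖M + Mᴴ‖ ^ 2 = 2 * ‖M‖ ^ 2 + 2 * RCLike.re (M * M).trace := by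
  rw [frobenius_norm_sq_eq_re_trace, frobenius_norm_sq_eq_re_trace, conjTranspose_add,
    conjTranspose_conjTranspose, add_comm Mᴴ, Matrix.add_mul, Matrix.mul_add, Matrix.mul_add]
  simp only [trace_add, map_add]
  rw [trace_mul_comm M Mᴴ, ← conjTranspose_mul, trace_conjTranspose, RCLike.star_def,
    RCLike.conj_re]
  ring

end Matrix

open Complex in
theorem exp_smul_add_exp_neg_smul_conjTranspose {ι : Type*} (t : ℝ) (Z : Matrix ι ι ℂ) :
    exp (t * I) • Z + exp (-(t * I)) • Zᴴ = exp (t * I) • Z + (exp (t * I) • Z)ᴴ := by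
  rw [conjTranspose_smul, star_def, ← exp_conj]
  simp

open Complex in
theorem integral_re_exp_sq_mul (w : ℂ) :
    ∫ t in (0 : ℝ)..(2 * Real.pi), (exp (t * I) ^ 2 * w).re = 0 := by
  have hexp (t : ℝ) : exp (t * I) ^ 2 * w = exp ((2 * I) * t) * w := by
    rw [← exp_nat_mul]; ring_nf
  have hperiod : exp (2 * I * (2 * Real.pi)) = 1 := by
    rw [← exp_nat_mul_two_pi_mul_I 2]; push_cast; ring_nf
  simp_rw [hexp, ← RCLike.re_to_complex]
  rw [intervalIntegral.intervalIntegral_re (Continuous.intervalIntegrable (by fun_prop) _ _),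
    intervalIntegral.integral_mul_const, integral_exp_mul_complex (by simp)]
  simp [hperiod]

section MomentForm

variable {ι : Type*} [Fintype ι]

noncomputable def momentForm (v m : ℝ) (Z : Matrix ι ι ℂ) : ℝ :=
  (v * ‖Z‖ ^ 2 + m ^ 2 * ‖Z.trace‖ ^ 2) / 2

theorem momentForm_nonneg {v : ℝ} (hv : 0 ≤ v) (m : ℝ) (Z : Matrix ι ι ℂ) :
    0 ≤ momentForm v m Z := by
  unfold momentForm; positivity

theorem momentForm_unitary_conj [DecidableEq ι] (v m : ℝ) {U : Matrix ι ι ℂ}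
    (hU : U ∈ unitaryGroup ι ℂ) (A : Matrix ι ι ℂ) :
    momentForm v m (U * A * Uᴴ) = momentForm v m A := by
  have hUU : Uᴴ * U = 1 := (mem_unitaryGroup_iff').mp hU
  rw [momentForm, momentForm, ← star_eq_conjTranspose,
    Matrix.frobenius_norm_mul_unitary (Unitary.star_mem hU),
    Matrix.frobenius_norm_unitary_mul hU, trace_mul_cycle, star_eq_conjTranspose, hUU,
    Matrix.one_mul]

theorem momentForm_mul_le {v : ℝ} (hv : 0 < v) (m : ℝ) (A B : Matrix ι ι ℂ) :
    momentForm v m (A * B) ≤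
      (2 * v + 2 * m ^ 2) / v ^ 2 * momentForm v m A * momentForm v m B := by
  have hAB : ‖A * B‖ ^ 2 ≤ ‖A‖ ^ 2 * ‖B‖ ^ 2 := by
    rw [← mul_pow]; gcongr; exact Matrix.frobenius_norm_mul A B
  have htr : ‖(A * B).trace‖ ^ 2 ≤ ‖A‖ ^ 2 * ‖B‖ ^ 2 := by
    rw [← mul_pow]; gcongr; exact Matrix.norm_trace_mul_le A B
  have hA : v * ‖A‖ ^ 2 / 2 ≤ momentForm v m A := by
    unfold momentForm; linarith [show 0 ≤ m ^ 2 * ‖A.trace‖ ^ 2 by positivity]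
  have hB : v * ‖B‖ ^ 2 / 2 ≤ momentForm v m B := by
    unfold momentForm; linarith [show 0 ≤ m ^ 2 * ‖B.trace‖ ^ 2 by positivity]
  calc momentForm v m (A * B) ≤ (v + m ^ 2) * (‖A‖ ^ 2 * ‖B‖ ^ 2) / 2 := by
        unfold momentForm; nlinarith [sq_nonneg m]
    _ = (2 * v + 2 * m ^ 2) / v ^ 2 * (v * ‖A‖ ^ 2 / 2) * (v * ‖B‖ ^ 2 / 2) := by
        field_simp
    _ ≤ (2 * v + 2 * m ^ 2) / v ^ 2 * momentForm v m A * momentForm v m B := by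
        gcongr
        exact mul_nonneg (by positivity) (momentForm_nonneg hv.le m A)

theorem sqrt_momentForm_mul_le {v : ℝ} (hv : 0 < v) (m : ℝ) (A B : Matrix ι ι ℂ) :
    √(momentForm v m (A * B)) ≤
      √(2 * v + 2 * m ^ 2) / v * √(momentForm v m A) * √(momentForm v m B) := by
  calc √(momentForm v m (A * B))
      ≤ √((2 * v + 2 * m ^ 2) / v ^ 2 * momentForm v m A * momentForm v m B) :=
        Real.sqrt_le_sqrt (momentForm_mul_le hv m A B)
    _ = √(2 * v + 2 * m ^ 2) / v * √(momentForm v m A) * √(momentForm v m B) := by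
        rw [Real.sqrt_mul (by positivity [momentForm_nonneg hv.le m A]),
          Real.sqrt_mul (by positivity), Real.sqrt_div' _ (by positivity), Real.sqrt_sq hv.le]

theorem momentForm_add_conjTranspose (v m : ℝ) (M : Matrix ι ι ℂ) :
    momentForm v m (M + Mᴴ) =
      2 * momentForm v m M + (v * (M * M).trace + m ^ 2 * M.trace ^ 2).re := by
  have htr : ‖(M + Mᴴ).trace‖ ^ 2 = 2 * ‖M.trace‖ ^ 2 + 2 * (M.trace * M.trace).re := by
    rw [trace_add, trace_conjTranspose, Matrix.norm_add_conj_sq]; rfl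
  simp only [momentForm, Matrix.frobenius_norm_add_conjTranspose_sq, htr, Complex.add_re,
    ← Complex.ofReal_pow, Complex.re_ofReal_mul, RCLike.re_to_complex, sq M.trace]
  ring

open Complex in
theorem momentForm_rotate (v m t : ℝ) (Z : Matrix ι ι ℂ) :
    momentForm v m (exp (t * I) • Z + exp (-(t * I)) • Zᴴ) =
      2 * momentForm v m Z +
        (exp (t * I) ^ 2 * (v * (Z * Z).trace + m ^ 2 * Z.trace ^ 2)).re := by
  have hZ : momentForm v m (exp (t * I) • Z) = momentForm v m Z := by
    simp [momentForm, norm_smul, norm_exp_ofReal_mul_I]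
  rw [exp_smul_add_exp_neg_smul_conjTranspose, momentForm_add_conjTranspose, hZ, smul_mul_smul,
    trace_smul, trace_smul, smul_eq_mul, smul_eq_mul]
  ring_nf

end MomentForm

theorem integral_sq_sum_mul_eq {Ω ι : Type*} [MeasurableSpace Ω] {P : Measure Ω}
    [IsProbabilityMeasure P] [Fintype ι] {X : ι → Ω → ℝ} (hX : ∀ i, MemLp (X i) 2 P)
    (hind : Pairwise fun i j => X i ⟂ᵢ[P] X j) {m v : ℝ} (hm : ∀ i, P[X i] = m)
    (hv : ∀ i, Var[X i; P] = v) (c : ι → ℝ) :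
    ∫ ω, (∑ i, X i ω * c i) ^ 2 ∂P = v * ∑ i, c i ^ 2 + m ^ 2 * (∑ i, c i) ^ 2 := by
  set Y : ι → Ω → ℝ := fun i ω => X i ω * c i
  have hY (i : ι) : MemLp (Y i) 2 P := (hX i).mul_const (c i)
  have hvar : Var[∑ i, Y i; P] = v * ∑ i, c i ^ 2 := by
    rw [IndepFun.variance_sum (fun i _ => hY i)]
    · simp [Y, variance_mul_const, hv, Finset.mul_sum]
    · exact fun i _ j _ hij => (hind hij).comp (measurable_id.mul_const _)
        (measurable_id.mul_const _)
  have hmean : P[∑ i, Y i] = m * ∑ i, c i := by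
    simp [Y, integral_finsetSum _ fun i _ => (hY i).integrable one_le_two, integral_mul_const,
      hm, Finset.mul_sum]
  have hS := variance_eq_sub (memLp_finsetSum' Finset.univ fun i _ => hY i)
  rw [hvar, hmean] at hS
  simp only [Pi.pow_apply, Finset.sum_apply, Y] at hS
  linarith

section Norms

variable {Ω : Type} [MeasurableSpace Ω] {P : Measure Ω} [IsProbabilityMeasure P] {ξ : Ω → ℝ}
  {n : ℕ} {X : Fin n → Ω → ℝ}

theorem hermNormXd_two_eq (hξ : MemLp ξ 2 P) (hind : Pairwise fun i j => X i ⟂ᵢ[P] X j)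
    (hid : ∀ i, IdentDistrib (X i) ξ P P) {A : Matrix (Fin n) (Fin n) ℂ} (hA : A.IsHermitian) :
    hermNormXd P X 2 A = √(momentForm Var[ξ; P] P[ξ] A) := by
  have hΓ : Real.Gamma (2 + 1) = 2 := by norm_num
  simp_rw [hermNormXd, dif_pos hA, Real.rpow_two, sq_abs]
  rw [integral_sq_sum_mul_eq (fun i => (hid i).memLp_iff.mpr hξ) hind
    (fun i => (hid i).integral_eq) (fun i => (hid i).variance_eq), hA.sum_eigenvalues_sq,
    hA.sq_sum_eigenvalues, hΓ, Real.sqrt_eq_rpow, momentForm]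

theorem matNormXd_two_eq (hξ : MemLp ξ 2 P) (hind : Pairwise fun i j => X i ⟂ᵢ[P] X j)
    (hid : ∀ i, IdentDistrib (X i) ξ P P) (Z : Matrix (Fin n) (Fin n) ℂ) :
    matNormXd P X 2 Z = √(momentForm Var[ξ; P] P[ξ] Z) := by
  set q := momentForm Var[ξ; P] P[ξ] Z
  set w : ℂ := Var[ξ; P] * (Z * Z).trace + ((P[ξ] : ℝ) : ℂ) ^ 2 * Z.trace ^ 2
  have hΓ : Real.Gamma (2 / 2 + 1) ^ 2 / (2 * Real.pi * Real.Gamma (2 + 1)) =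
      1 / (4 * Real.pi) := by
    norm_num; ring
  have hsq (t : ℝ) : hermNormXd P X 2 (Complex.exp (t * Complex.I) • Z +
      Complex.exp (-(t * Complex.I)) • Zᴴ) ^ (2 : ℝ) =
      2 * q + (Complex.exp (t * Complex.I) ^ 2 * w).re := by
    have hH := exp_smul_add_exp_neg_smul_conjTranspose t Z ▸ isHermitian_add_transpose_self _
    rw [hermNormXd_two_eq hξ hind hid hH, Real.rpow_two,
      Real.sq_sqrt (momentForm_nonneg (variance_nonneg _ _) _ _), momentForm_rotate]
  rw [matNormXd, hΓ]
  simp_rw [hsq]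
  rw [intervalIntegral.integral_add intervalIntegrable_const
    (Continuous.intervalIntegrable (by fun_prop) _ _), integral_re_exp_sq_mul,
    intervalIntegral.integral_const, Real.sqrt_eq_rpow, smul_eq_mul]
  congr 1
  field_simp
  ring

end Norms

/-- If `E[ξ²] < ∞` and `γ = √(2σ² + 2μ²)/σ²`, then for every `n ≥ 1`
and all `A, B ∈ M_n(ℂ)` we have `⦀AB⦀_{X,2} ≤ γ ⦀A⦀_{X,2} ⦀B⦀_{X,2}`, and moreover
`⦀UAU^*⦀_{X,2} = ⦀A⦀_{X,2}` for every unitary `U` and Hermitian `A`. -/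
theorem d_two_submultiplicative_and_weakly_unitarily_invariant
    {Ω : Type} [MeasurableSpace Ω] (P : Measure Ω) [IsProbabilityMeasure P]
    (ξ : Ω → ℝ) (hmeas : Measurable ξ)
    (hnd : ¬ ∃ c : ℝ, ∀ᵐ ω ∂P, ξ ω = c)
    (hmom : Integrable (fun ω => ξ ω ^ 2) P)
    (μ σ γ : ℝ) (hμ : μ = ∫ ω, ξ ω ∂P)
    (hσ : σ = Real.sqrt (∫ ω, (ξ ω - μ) ^ 2 ∂P))
    (hγ : γ = Real.sqrt (2 * σ ^ 2 + 2 * μ ^ 2) / σ ^ 2) :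
    ∀ n : ℕ, 1 ≤ n → ∀ X : Fin n → Ω → ℝ,
      (∀ i, Measurable (X i)) →
      iIndepFun X P →
      (∀ i, IdentDistrib (X i) ξ P P) →
      (∀ A B : Matrix (Fin n) (Fin n) ℂ,
        matNormXd P X 2 (A * B) ≤ γ * matNormXd P X 2 A * matNormXd P X 2 B) ∧
      (∀ U : Matrix (Fin n) (Fin n) ℂ, U ∈ Matrix.unitaryGroup (Fin n) ℂ →
        ∀ A : Matrix (Fin n) (Fin n) ℂ, A.IsHermitian →
          matNormXd P X 2 (U * A * Uᴴ) = matNormXd P X 2 A) := by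
  intro n _ X _ hind hid
  have hξ : MemLp ξ 2 P := (memLp_two_iff_integrable_sq hmeas.aestronglyMeasurable).mpr hmom
  have hσ_sq : σ ^ 2 = Var[ξ; P] := by
    rw [hσ, Real.sq_sqrt (integral_nonneg fun _ => sq_nonneg _), hμ,
      variance_eq_integral hmeas.aemeasurable]
  have hvar_pos : 0 < Var[ξ; P] := (variance_nonneg ξ P).lt_of_ne fun h =>
    hnd ⟨_, ae_eq_integral_of_variance_eq_zero hξ h.symm⟩
  have hpair : Pairwise fun i j => X i ⟂ᵢ[P] X j := fun i j hij => hind.indepFun hij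
  simp only [matNormXd_two_eq hξ hpair hid, hγ, hσ_sq, hμ]
  exact ⟨sqrt_momentForm_mul_le hvar_pos _,
    fun U hU A _ => by rw [momentForm_unitary_conj _ _ hU]⟩
end

section
/- Suppose E[ξ²] < ∞. Then for every n ≥ 1 and every Z ∈ M_n(ℂ): ⦀Z⦀_{X,2}² = (1/2) σ² ‖Z‖_F² + (1/2) μ² |tr(Z)|², where ‖Z‖_F is the Frobenius norm and tr(Z) the trace of Z. -/
/-! For Hermitian `A` with eigenvalues `λ`, independence of the `Xᵢ` gives
`E[(∑ Xᵢ λᵢ)²] = σ² ∑ λᵢ² + μ² (∑ λᵢ)²`, where `∑ λᵢ² = ‖A‖_F²` and `∑ λᵢ = tr A`.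
For `A_t = Y + Yᴴ` with `Y = e^{it} Z` one gets `‖A_t‖_F² = 2 ‖Z‖_F² + 2 Re (e^{2it} tr Z²)` and
`|tr A_t|² = 2 |tr Z|² + 2 Re (e^{2it} (tr Z)²)`; the oscillating terms average to zero over
`[0, 2π]`. -/

open MeasureTheory ProbabilityTheory Matrix

/-- The Frobenius norm of a complex matrix. -/
noncomputable def frobNorm {n : ℕ} (A : Matrix (Fin n) (Fin n) ℂ) : ℝ :=
  Real.sqrt (∑ i, ∑ j, ‖A i j‖ ^ 2)

theorem Real.Gamma_three : Real.Gamma 3 = 2 := by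
  rw [show (3 : ℝ) = 2 + 1 by norm_num, Real.Gamma_add_one two_ne_zero, Real.Gamma_two, mul_one]

theorem Complex.norm_add_conj_sq (x y : ℂ) :
    ‖x + starRingEnd ℂ y‖ ^ 2 = ‖x‖ ^ 2 + ‖y‖ ^ 2 + 2 * (x * y).re := by
  simp only [Complex.sq_norm, Complex.normSq_apply, Complex.add_re, Complex.add_im,
    Complex.conj_re, Complex.conj_im, Complex.mul_re]
  ring

theorem Complex.star_exp_mul_I (t : ℝ) :
    star (Complex.exp (t * Complex.I)) = Complex.exp (-(t * Complex.I)) := by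
  rw [Complex.star_def, ← Complex.exp_conj, map_mul, Complex.conj_ofReal, Complex.conj_I, mul_neg]

theorem integral_re_exp_mul_I_sq_mul (w : ℂ) :
    ∫ t in (0 : ℝ)..2 * Real.pi, (Complex.exp (t * Complex.I) ^ 2 * w).re = 0 := by
  have hre : ∀ t : ℝ, (Complex.exp (t * Complex.I) ^ 2 * w).re =
      w.re * Real.cos (2 * t) - w.im * Real.sin (2 * t) := by
    intro t
    rw [← Complex.exp_nat_mul, show ((2 : ℕ) : ℂ) * (t * Complex.I) = ((2 * t : ℝ) : ℂ) *
      Complex.I by push_cast; ring, Complex.exp_mul_I]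
    simp only [Complex.mul_re, Complex.add_re, Complex.add_im, Complex.mul_im,
      Complex.cos_ofReal_re, Complex.sin_ofReal_re, Complex.cos_ofReal_im, Complex.sin_ofReal_im,
      Complex.I_re, Complex.I_im]
    ring
  have h4π : 2 * (2 * Real.pi) = (4 : ℕ) * Real.pi := by push_cast; ring
  have h4π' : 2 * (2 * Real.pi) = (2 : ℕ) * (2 * Real.pi) := by push_cast; ring
  simp_rw [hre]
  rw [intervalIntegral.integral_sub (Continuous.intervalIntegrable (by fun_prop) _ _)
    (Continuous.intervalIntegrable (by fun_prop) _ _), intervalIntegral.integral_const_mul,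
    intervalIntegral.integral_const_mul,
    intervalIntegral.integral_comp_mul_left (fun x => Real.cos x) two_ne_zero,
    intervalIntegral.integral_comp_mul_left (fun x => Real.sin x) two_ne_zero, integral_cos,
    integral_sin, h4π, Real.sin_nat_mul_pi, ← h4π, h4π', Real.cos_nat_mul_two_pi]
  simp

namespace Matrix

variable {n : Type*} [Fintype n]

theorem sum_norm_sq_add_conjTranspose (Y : Matrix n n ℂ) :
    ∑ i, ∑ j, ‖(Y + Yᴴ) i j‖ ^ 2 = 2 * ∑ i, ∑ j, ‖Y i j‖ ^ 2 + 2 * (Y * Y).trace.re := by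
  simp only [add_apply, conjTranspose_apply, RCLike.star_def, Complex.norm_add_conj_sq,
    Finset.sum_add_distrib, trace, diag_apply, mul_apply, Complex.re_sum, ← Finset.mul_sum]
  rw [Finset.sum_comm (f := fun i j => ‖Y j i‖ ^ 2)]
  ring

theorem norm_trace_add_conjTranspose_sq (Y : Matrix n n ℂ) :
    ‖(Y + Yᴴ).trace‖ ^ 2 = 2 * ‖Y.trace‖ ^ 2 + 2 * (Y.trace ^ 2).re := by
  rw [trace_add, trace_conjTranspose, RCLike.star_def, Complex.norm_add_conj_sq, sq Y.trace]
  ring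

namespace IsHermitian

variable {𝕜 : Type*} [RCLike 𝕜] {A : Matrix n n 𝕜}

theorem trace_mul_self_eq_sum_norm_sq (hA : A.IsHermitian) :
    (A * A).trace = ((∑ i, ∑ j, ‖A i j‖ ^ 2 : ℝ) : 𝕜) := by
  push_cast
  refine Finset.sum_congr rfl fun i _ => Finset.sum_congr rfl fun j _ => ?_
  change A i j * A j i = _
  rw [← hA.apply j i, RCLike.star_def, RCLike.mul_conj]

theorem sum_eigenvalues_sq_eq_sum_norm_sq [DecidableEq n] (hA : A.IsHermitian) :
    ∑ i, hA.eigenvalues i ^ 2 = ∑ i, ∑ j, ‖A i j‖ ^ 2 := by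
  have h : (A * A).trace = ((∑ i, hA.eigenvalues i ^ 2 : ℝ) : 𝕜) := by
    conv_lhs => rw [hA.spectral_theorem, ← map_mul, Unitary.conjStarAlgAut_apply,
      trace_mul_cycle, Unitary.coe_star_mul_self, one_mul, diagonal_mul_diagonal, trace_diagonal]
    simp [sq]
  exact_mod_cast h.symm.trans hA.trace_mul_self_eq_sum_norm_sq

end IsHermitian

end Matrix

theorem integral_sum_mul_sq_of_iIndepFun {Ω ι : Type*} [MeasurableSpace Ω] {P : Measure Ω}
    [IsProbabilityMeasure P] [Fintype ι] {ξ : Ω → ℝ} {X : ι → Ω → ℝ} (hξ : MemLp ξ 2 P)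
    (hindep : iIndepFun X P) (hid : ∀ i, IdentDistrib (X i) ξ P P) (a : ι → ℝ) :
    ∫ ω, (∑ i, X i ω * a i) ^ 2 ∂P = Var[ξ; P] * ∑ i, a i ^ 2 + P[ξ] ^ 2 * (∑ i, a i) ^ 2 := by
  set Y : ι → Ω → ℝ := fun i ω => X i ω * a i
  have hY : ∀ i, MemLp (Y i) 2 P := fun i => ((hid i).memLp_iff.2 hξ).mul_const (a i)
  have hvar : Var[∑ i, Y i; P] = Var[ξ; P] * ∑ i, a i ^ 2 := by
    rw [IndepFun.variance_sum (fun i _ => hY i) fun i _ j _ hij =>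
      (hindep.indepFun hij).comp (measurable_id.mul_const _) (measurable_id.mul_const _),
      Finset.mul_sum]
    refine Finset.sum_congr rfl fun i _ => ?_
    rw [variance_mul_const, (hid i).variance_eq, mul_comm]
  have hmean : P[∑ i, Y i] = P[ξ] * ∑ i, a i := by
    rw [Finset.sum_fn, integral_finsetSum _ fun i _ => (hY i).integrable one_le_two,
      Finset.mul_sum]
    refine Finset.sum_congr rfl fun i _ => ?_
    rw [integral_mul_const, (hid i).integral_eq, mul_comm]
  have hsq : (∑ i, Y i) ^ 2 = fun ω => (∑ i, X i ω * a i) ^ 2 := by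
    ext ω
    simp [Y]
  rw [variance_eq_sub (memLp_finsetSum' _ fun i _ => hY i), hmean, hsq] at hvar
  linarith

section TwoNorm

variable {Ω : Type} [MeasurableSpace Ω] {P : Measure Ω} [IsProbabilityMeasure P] {ξ : Ω → ℝ}
  {n : ℕ} {X : Fin n → Ω → ℝ}

theorem hermNormXd_two_sq (hξ : MemLp ξ 2 P) (hindep : iIndepFun X P)
    (hid : ∀ i, IdentDistrib (X i) ξ P P) {A : Matrix (Fin n) (Fin n) ℂ} (hA : A.IsHermitian) :
    hermNormXd P X 2 A ^ 2 =
      (Var[ξ; P] * ∑ i, ∑ j, ‖A i j‖ ^ 2 + P[ξ] ^ 2 * ‖A.trace‖ ^ 2) / 2 := by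
  have htr : ‖A.trace‖ ^ 2 = (∑ i, hA.eigenvalues i) ^ 2 := by
    rw [hA.trace_eq_sum_eigenvalues, ← RCLike.ofReal_sum, RCLike.norm_ofReal, sq_abs]
  have hmoment := integral_sum_mul_sq_of_iIndepFun hξ hindep hid hA.eigenvalues
  simp only [hermNormXd, dif_pos hA, Real.rpow_two, sq_abs]
  rw [← Real.sqrt_eq_rpow, Real.sq_sqrt (div_nonneg (integral_nonneg fun _ => sq_nonneg _)
    (Real.Gamma_nonneg_of_nonneg (by norm_num))), hmoment, hA.sum_eigenvalues_sq_eq_sum_norm_sq,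
    htr]
  norm_num [Real.Gamma_three]

theorem hermNormXd_two_sq_add_conjTranspose (hξ : MemLp ξ 2 P) (hindep : iIndepFun X P)
    (hid : ∀ i, IdentDistrib (X i) ξ P P) (Y : Matrix (Fin n) (Fin n) ℂ) :
    hermNormXd P X 2 (Y + Yᴴ) ^ 2 =
      Var[ξ; P] * ∑ i, ∑ j, ‖Y i j‖ ^ 2 + P[ξ] ^ 2 * ‖Y.trace‖ ^ 2 +
        ((Var[ξ; P] : ℂ) * (Y * Y).trace + (P[ξ] ^ 2 : ℝ) * Y.trace ^ 2).re := by
  rw [hermNormXd_two_sq hξ hindep hid (isHermitian_add_transpose_self Y),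
    sum_norm_sq_add_conjTranspose, norm_trace_add_conjTranspose_sq, Complex.add_re,
    Complex.re_ofReal_mul, Complex.re_ofReal_mul]
  ring

theorem hermNormXd_two_sq_exp_smul_add (hξ : MemLp ξ 2 P) (hindep : iIndepFun X P)
    (hid : ∀ i, IdentDistrib (X i) ξ P P) (Z : Matrix (Fin n) (Fin n) ℂ) (t : ℝ) :
    hermNormXd P X 2
        (Complex.exp (t * Complex.I) • Z + Complex.exp (-(t * Complex.I)) • Zᴴ) ^ 2 =
      Var[ξ; P] * ∑ i, ∑ j, ‖Z i j‖ ^ 2 + P[ξ] ^ 2 * ‖Z.trace‖ ^ 2 +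
        (Complex.exp (t * Complex.I) ^ 2 *
          ((Var[ξ; P] : ℂ) * (Z * Z).trace + (P[ξ] ^ 2 : ℝ) * Z.trace ^ 2)).re := by
  set u := Complex.exp (t * Complex.I)
  have hu : ‖u‖ = 1 := Complex.norm_exp_ofReal_mul_I t
  rw [← Complex.star_exp_mul_I, ← conjTranspose_smul,
    hermNormXd_two_sq_add_conjTranspose hξ hindep hid]
  simp only [Matrix.smul_apply, smul_eq_mul, norm_mul, hu, one_mul, trace_smul, smul_mul_smul,
    mul_pow]
  ring_nf

theorem matNormXd_two_sq (hξ : MemLp ξ 2 P) (hindep : iIndepFun X P)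
    (hid : ∀ i, IdentDistrib (X i) ξ P P) (Z : Matrix (Fin n) (Fin n) ℂ) :
    matNormXd P X 2 Z ^ 2 =
      (Var[ξ; P] * ∑ i, ∑ j, ‖Z i j‖ ^ 2 + P[ξ] ^ 2 * ‖Z.trace‖ ^ 2) / 2 := by
  set K := Var[ξ; P] * ∑ i, ∑ j, ‖Z i j‖ ^ 2 + P[ξ] ^ 2 * ‖Z.trace‖ ^ 2
  have hK : 0 ≤ K := by
    have := variance_nonneg ξ P
    positivity
  have hint : ∫ t in (0 : ℝ)..2 * Real.pi, hermNormXd P X 2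
      (Complex.exp (t * Complex.I) • Z + Complex.exp (-(t * Complex.I)) • Zᴴ) ^ (2 : ℝ) =
      2 * Real.pi * K := by
    simp_rw [Real.rpow_two, hermNormXd_two_sq_exp_smul_add hξ hindep hid]
    rw [intervalIntegral.integral_add intervalIntegrable_const
      (Continuous.intervalIntegrable (by fun_prop) _ _), integral_re_exp_mul_I_sq_mul,
      intervalIntegral.integral_const, sub_zero, smul_eq_mul, add_zero]
  rw [matNormXd, hint, ← Real.sqrt_eq_rpow, Real.sq_sqrt (by positivity)]
  norm_num [Real.Gamma_two, Real.Gamma_three]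
  field_simp

end TwoNorm

/-- If `E[ξ²] < ∞`, then for every `n ≥ 1` and every `Z ∈ M_n(ℂ)`:
`⦀Z⦀_{X,2}² = (1/2) σ² ‖Z‖_F² + (1/2) μ² |tr Z|²`. -/
theorem matNormXd_two_formula
    {Ω : Type} [MeasurableSpace Ω] (P : Measure Ω) [IsProbabilityMeasure P]
    (ξ : Ω → ℝ) (hmeas : Measurable ξ)
    (hmom : Integrable (fun ω => ξ ω ^ 2) P)
    (μ σ : ℝ) (hμ : μ = ∫ ω, ξ ω ∂P)
    (hσ : σ = Real.sqrt (∫ ω, (ξ ω - μ) ^ 2 ∂P)) :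
    ∀ n : ℕ, 1 ≤ n → ∀ X : Fin n → Ω → ℝ,
      (∀ i, Measurable (X i)) →
      iIndepFun X P →
      (∀ i, IdentDistrib (X i) ξ P P) →
      ∀ Z : Matrix (Fin n) (Fin n) ℂ,
        matNormXd P X 2 Z ^ 2 =
          (1 / 2) * σ ^ 2 * frobNorm Z ^ 2 + (1 / 2) * μ ^ 2 * ‖Z.trace‖ ^ 2 := by
  intro n _ X _ hindep hid Z
  have hξ : MemLp ξ 2 P := (memLp_two_iff_integrable_sq hmeas.aestronglyMeasurable).2 hmom
  have hσ2 : σ ^ 2 = Var[ξ; P] := by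
    rw [hσ, Real.sq_sqrt (integral_nonneg fun _ => sq_nonneg _), hμ,
      variance_eq_integral hmeas.aemeasurable]
  rw [matNormXd_two_sq hξ hindep hid, frobNorm, Real.sq_sqrt (by positivity), hσ2, hμ]
  ring
end
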